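/- arXiv:1109.1146 — 2 statements merged into one kernel-verified Lean document; each statement's English description precedes it below -/
import Mathlib

section
/- The region-relabeled labeling d' is region-valid for c; that is, d'(t) = 0 and, for all u, v ∈ V with c(u,v) > 0: d'(u) ≤ d'(v) if u, v ∈ R ∪ {t}, and d'(u) ≤ d'(v) + 1 if u ∈ B or v ∈ B. -/
variable {V : Type*}

/-- `w` is reachable from `v` under capacity `c`: there is a (possibly empty)
sequence of edges with strictly positive capacity from `v` to `w`. -/
def Reach (c : V → V → ℕ) : V → V → Prop :=
  Relation.ReflTransGen fun a b => 0 < c a b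

/-- `u → S`: some vertex of `S` is reachable from `u`. -/
def ReachTo (c : V → V → ℕ) (u : V) (S : Set V) : Prop :=
  ∃ y ∈ S, Reach c u y

/-- `T_a = {t} ∪ {w ∈ B | d₀ w < a}`. -/
def Tset (B : Set V) (t : V) (d₀ : V → ℕ) (a : ℕ) : Set V :=
  insert t {w ∈ B | d₀ w < a}

/-- A labeling `d` is region-valid for `c` if `d t = 0` and, for every edge with
positive capacity, `d u ≤ d v` if both endpoints are in `R ∪ {t}`, and
`d u ≤ d v + 1` if one of the endpoints lies in `B`. -/
def RegionValid (c : V → V → ℕ) (R B : Set V) (t : V) (d : V → ℕ) : Prop :=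
  d t = 0 ∧ ∀ u v : V, 0 < c u v →
    ((u ∈ R ∪ {t} ∧ v ∈ R ∪ {t}) → d u ≤ d v) ∧ ((u ∈ B ∨ v ∈ B) → d u ≤ d v + 1)

/-- The region-relabeled labeling `d'` (defined by `d' t = 0`, `d' = d₀` on `B`,
and `d' u = min {k | u → T_k}` for `u ∈ R` when `u → T_{d^∞}`, `d' u = d^∞`
otherwise) is region-valid. -/
theorem stmt5 (c : V → V → ℕ) (R B : Set V) (t : V)
    (hRB : R ∩ B = ∅) (htR : t ∉ R) (htB : t ∉ B)
    (hcover : ∀ v : V, v ∈ R ∨ v ∈ B ∨ v = t)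
    (d₀ : V → ℕ) (dInf : ℕ) (hd₀ : ∀ w ∈ B, d₀ w ≤ dInf)
    (hB : ∀ w ∈ B, ¬ ReachTo c w (Tset B t d₀ (d₀ w)))
    (d' : V → ℕ)
    (hd't : d' t = 0)
    (hd'B : ∀ w ∈ B, d' w = d₀ w)
    (hd'R : ∀ u ∈ R,
      (ReachTo c u (Tset B t d₀ dInf) →
        d' u = sInf {k : ℕ | ReachTo c u (Tset B t d₀ k)}) ∧
      (¬ ReachTo c u (Tset B t d₀ dInf) → d' u = dInf)) :
    RegionValid c R B t d' := by
  have hmono : ∀ {k k' : ℕ}, k ≤ k' → Tset B t d₀ k ⊆ Tset B t d₀ k' := by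
    intro k k' hkk x hx
    rcases hx with rfl | ⟨hxB, hxlt⟩
    · exact Set.mem_insert _ _
    · exact Set.mem_insert_of_mem _ ⟨hxB, lt_of_lt_of_le hxlt hkk⟩
  have htmem : ∀ k, t ∈ Tset B t d₀ k := fun k => Set.mem_insert _ _
  have hBmem : ∀ w ∈ B, ∀ k, d₀ w < k → w ∈ Tset B t d₀ k := fun w hw k hk =>
    Set.mem_insert_of_mem _ ⟨hw, hk⟩
  refine ⟨hd't, fun u v hc => ?_⟩
  have hstep : ∀ S : Set V, ReachTo c v S → ReachTo c u S := by
    rintro S ⟨y, hy, hr⟩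
    exact ⟨y, hy, Relation.ReflTransGen.head hc hr⟩
  have hself : ∀ (x : V) (S : Set V), x ∈ S → ReachTo c x S :=
    fun x S hx => ⟨x, hx, Relation.ReflTransGen.refl⟩
  have hedge : ∀ S : Set V, v ∈ S → ReachTo c u S := fun S hv => hstep S (hself v S hv)
  have huBnot : u ∈ B → ∀ k, ReachTo c u (Tset B t d₀ k) → d₀ u < k := by
    intro huB k hk
    by_contra h
    exact hB u huB ((fun ⟨y, hy, hr⟩ => ⟨y, hmono (not_lt.1 h) hy, hr⟩ :
      ReachTo c u (Tset B t d₀ k) → ReachTo c u (Tset B t d₀ (d₀ u))) hk)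
  rcases hcover u with huR | huB | rfl
  · -- u ∈ R
    by_cases hu : ReachTo c u (Tset B t d₀ dInf)
    · have hdu := (hd'R u huR).1 hu
      have hle : ∀ k, ReachTo c u (Tset B t d₀ k) → d' u ≤ k := by
        intro k hk
        rw [hdu]; exact Nat.sInf_le hk
      rcases hcover v with hvR | hvB | rfl
      · by_cases hv : ReachTo c v (Tset B t d₀ dInf)
        · have hdv := (hd'R v hvR).1 hv
          have hne : {k : ℕ | ReachTo c v (Tset B t d₀ k)}.Nonempty := ⟨dInf, hv⟩
          have := Nat.sInf_mem hne
          have h1 : d' u ≤ sInf {k : ℕ | ReachTo c v (Tset B t d₀ k)} :=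
            hle _ (hstep _ this)
          rw [hdv]
          exact ⟨fun _ => h1, fun _ => le_trans h1 (Nat.le_succ _)⟩
        · have hdv := (hd'R v hvR).2 hv
          rw [hdv]
          exact ⟨fun _ => hle _ hu, fun _ => le_trans (hle _ hu) (Nat.le_succ _)⟩
      · -- v ∈ B
        have h1 : d' u ≤ d₀ v + 1 := hle _ (hedge _ (hBmem v hvB _ (Nat.lt_succ_self _)))
        rw [hd'B v hvB]
        constructor
        · rintro ⟨_, hvR' | rfl⟩
          · exact absurd (Set.mem_inter hvR' hvB) (by simp [hRB])
          · exact absurd hvB htB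
        · exact fun _ => h1
      · -- v = t
        have h0 : d' u ≤ 0 := hle 0 (hedge _ (htmem 0))
        rw [hd't]
        exact ⟨fun _ => h0, fun _ => le_trans h0 (Nat.zero_le _)⟩
    · have hdu := (hd'R u huR).2 hu
      rcases hcover v with hvR | hvB | rfl
      · have hv : ¬ ReachTo c v (Tset B t d₀ dInf) := fun h => hu (hstep _ h)
        rw [hdu, (hd'R v hvR).2 hv]
        exact ⟨fun _ => le_refl _, fun _ => Nat.le_succ _⟩
      · have hge : dInf ≤ d₀ v := by
          by_contra h
          exact hu (hedge _ (hBmem v hvB _ (not_le.1 h)))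
        rw [hdu, hd'B v hvB]
        constructor
        · rintro ⟨_, hvR' | rfl⟩
          · exact absurd (Set.mem_inter hvR' hvB) (by simp [hRB])
          · exact absurd hvB htB
        · exact fun _ => le_trans hge (Nat.le_succ _)
      · exact absurd (hedge _ (htmem dInf)) hu
  · -- u ∈ B
    have hnotRt : ¬ (u ∈ R ∪ {t} ∧ v ∈ R ∪ {t}) := by
      rintro ⟨huR' | rfl, _⟩
      · exact absurd (Set.mem_inter huR' huB) (by simp [hRB])
      · exact absurd huB htB
    refine ⟨fun h => absurd h hnotRt, fun _ => ?_⟩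
    rw [hd'B u huB]
    rcases hcover v with hvR | hvB | rfl
    · by_cases hv : ReachTo c v (Tset B t d₀ dInf)
      · rw [(hd'R v hvR).1 hv]
        have hne : {k : ℕ | ReachTo c v (Tset B t d₀ k)}.Nonempty := ⟨dInf, hv⟩
        have hm := Nat.sInf_mem hne
        have := huBnot huB _ (hstep _ hm)
        omega
      · rw [(hd'R v hvR).2 hv]
        exact le_trans (hd₀ u huB) (Nat.le_succ _)
    · rw [hd'B v hvB]
      have := huBnot huB (d₀ u)
      by_contra h
      exact hB u huB (hedge _ (hBmem v hvB _ (by omega)))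
    · exact absurd (hedge _ (htmem (d₀ u))) (hB u huB)
  · -- u = t
    rw [hd't]
    exact ⟨fun _ => Nat.zero_le _, fun _ => Nat.zero_le _⟩
end

section
/- Let d : V → ℕ be any region-valid labeling for c with d(w) = d₀(w) for all w ∈ B and d(v) ≤ d^∞ for all v ∈ V. Then the region-relabeled labeling d' dominates d on the region: d'(u) ≥ d(u) for every u ∈ R. -/
variable {V : Type*}

/-- If `w ∈ B` reaches `T_k` and `w` cannot reach `T_{d₀ w}`, then `d₀ w < k`. -/
lemma aux_B_lt {c : V → V → ℕ} {B : Set V} {t : V} {d₀ : V → ℕ} {k : ℕ}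
    (hB : ∀ w ∈ B, ¬ ReachTo c w (Tset B t d₀ (d₀ w)))
    {w : V} (hw : w ∈ B) (hr : ReachTo c w (Tset B t d₀ k)) : d₀ w < k := by
  by_contra h
  push_neg at h
  apply hB w hw
  obtain ⟨y, hy, hry⟩ := hr
  refine ⟨y, ?_, hry⟩
  rcases hy with hy | ⟨hyB, hylt⟩
  · exact Or.inl hy
  · exact Or.inr ⟨hyB, lt_of_lt_of_le hylt h⟩

lemma aux_reach {c : V → V → ℕ} {R B : Set V} {t : V} {d₀ d : V → ℕ} {k : ℕ}
    (hRB : R ∩ B = ∅) (htR : t ∉ R) (htB : t ∉ B)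
    (hcover : ∀ v : V, v ∈ R ∨ v ∈ B ∨ v = t)
    (hB : ∀ w ∈ B, ¬ ReachTo c w (Tset B t d₀ (d₀ w)))
    (hdvalid : RegionValid c R B t d)
    (hdB : ∀ w ∈ B, d w = d₀ w)
    {v y : V} (h : Reach c v y) (hy : y ∈ Tset B t d₀ k) : d v ≤ k := by
  induction h using Relation.ReflTransGen.head_induction_on with
  | refl =>
    rcases hy with hy | ⟨hyB, hylt⟩
    · subst hy; simp [hdvalid.1]
    · rw [hdB _ hyB]; exact hylt.le
  | head hab hbc ih =>
    rename_i a m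
    rcases hcover a with haR | haB | hat
    · -- a ∈ R; look at m
      rcases hcover m with hmR | hmB | hmt
      · exact le_trans ((hdvalid.2 a m hab).1 ⟨Or.inl haR, Or.inl hmR⟩) ih
      · have hm : d₀ m < k := aux_B_lt hB hmB ⟨y, hy, hbc⟩
        have := (hdvalid.2 a m hab).2 (Or.inr hmB)
        rw [hdB _ hmB] at this
        omega
      · exact le_trans ((hdvalid.2 a m hab).1 ⟨Or.inl haR, Or.inr hmt⟩)
          (by rw [hmt, hdvalid.1]; exact Nat.zero_le _)
    · have ha : d₀ a < k :=
        aux_B_lt hB haB ⟨y, hy, Relation.ReflTransGen.head hab hbc⟩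
      rw [hdB _ haB]; exact ha.le
    · rw [hat, hdvalid.1]; exact Nat.zero_le _

/-- Any region-valid labeling `d` agreeing with `d₀` on `B` and bounded by `d^∞`
is dominated on the region by the region-relabeled labeling `d'`. -/
theorem stmt7 (c : V → V → ℕ) (R B : Set V) (t : V)
    (hRB : R ∩ B = ∅) (htR : t ∉ R) (htB : t ∉ B)
    (hcover : ∀ v : V, v ∈ R ∨ v ∈ B ∨ v = t)
    (d₀ : V → ℕ) (dInf : ℕ) (hd₀ : ∀ w ∈ B, d₀ w ≤ dInf)
    (hB : ∀ w ∈ B, ¬ ReachTo c w (Tset B t d₀ (d₀ w)))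
    (d' : V → ℕ)
    (hd't : d' t = 0)
    (hd'B : ∀ w ∈ B, d' w = d₀ w)
    (hd'R : ∀ u ∈ R,
      (ReachTo c u (Tset B t d₀ dInf) →
        d' u = sInf {k : ℕ | ReachTo c u (Tset B t d₀ k)}) ∧
      (¬ ReachTo c u (Tset B t d₀ dInf) → d' u = dInf))
    (d : V → ℕ) (hdvalid : RegionValid c R B t d)
    (hdB : ∀ w ∈ B, d w = d₀ w) (hdle : ∀ v : V, d v ≤ dInf) :
    ∀ u ∈ R, d u ≤ d' u := by
  intro u hu
  by_cases hreach : ReachTo c u (Tset B t d₀ dInf)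
  · rw [(hd'R u hu).1 hreach]
    have hne : {k : ℕ | ReachTo c u (Tset B t d₀ k)}.Nonempty := ⟨dInf, hreach⟩
    have hmem := Nat.sInf_mem hne
    obtain ⟨y, hy, hry⟩ := hmem
    exact aux_reach hRB htR htB hcover hB hdvalid hdB hry hy
  · rw [(hd'R u hu).2 hreach]; exact hdle u
end
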